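/- arXiv:1212.6465 — 6 statements merged into one kernel-verified Lean document; each statement's English description precedes it below -/
import Mathlib

section
/- For all strictly positive real numbers x and y, min(x,y) + s(x,y) > 0, where s(x,y) = log(1 + e^{-(x+y)}) - log(1 + e^{-|x-y|}). -/
lemma key_sCorr (a b : ℝ) (ha : 0 < a) (hab : a ≤ b) :
    a + (Real.log (1 + Real.exp (-(a + b))) - Real.log (1 + Real.exp (-(b - a)))) > 0 := by
  have hb : 0 < b := lt_of_lt_of_le ha hab
  have h1 : (0:ℝ) < 1 + Real.exp (-(a + b)) := by positivity
  have h2 : (0:ℝ) < 1 + Real.exp (-(b - a)) := by positivity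
  have hA : a + Real.log (1 + Real.exp (-(a + b)))
      = Real.log (Real.exp a * (1 + Real.exp (-(a + b)))) := by
    rw [Real.log_mul (Real.exp_ne_zero a) (ne_of_gt h1), Real.log_exp]
  have goal2 : Real.log (1 + Real.exp (-(b - a)))
      < Real.log (Real.exp a * (1 + Real.exp (-(a + b)))) := by
    apply Real.log_lt_log h2
    have e1 : Real.exp (-(b - a)) = Real.exp a * Real.exp (-b) := by
      rw [← Real.exp_add]; ring_nf
    have e2 : Real.exp a * Real.exp (-(a + b)) = Real.exp (-b) := by
      rw [← Real.exp_add]; ring_nf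
    have hea : 1 < Real.exp a := by
      have := Real.exp_lt_exp.mpr ha
      simpa using this
    have heb : Real.exp (-b) < 1 := by
      have := Real.exp_lt_exp.mpr (show -b < 0 by linarith)
      simpa using this
    nlinarith [Real.exp_pos a, Real.exp_pos (-b)]
  linarith [hA ▸ goal2]

theorem min_add_sCorr_pos (x y : ℝ) (hx : 0 < x) (hy : 0 < y) :
    min x y + (Real.log (1 + Real.exp (-(x + y))) - Real.log (1 + Real.exp (-|x - y|))) > 0 := by
  rcases le_total x y with h | h
  · have h1 : min x y = x := min_eq_left h
    have h2 : |x - y| = y - x := by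
      rw [abs_of_nonpos (by linarith)]; ring
    rw [h1, h2]
    exact key_sCorr x y hx h
  · have h1 : min x y = y := min_eq_right h
    have h2 : |x - y| = x - y := abs_of_nonneg (by linarith)
    rw [h1, h2]
    have := key_sCorr y x hy h
    have e : y + x = x + y := by ring
    rw [e] at this
    exact this
end

section
/- For all real numbers x and y, the pairwise box-plus operation defined by x ⊞ y = log((1 + e^{x+y})/(e^x + e^y)) equals sign(x)·sign(y)·min(|x|,|y|) + s(x,y), where s(x,y) = log(1 + e^{-|x+y|}) - log(1 + e^{-|x-y|}). -/
/-!
The numerator and denominator of `x ⊞ y` are both sums of two exponentials, and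
`log (e^a + e^b) = max a b + log (1 + e^{-|a - b|})`. Applied to `(0, x + y)` and `(x, y)`, the two
correction terms make up `s(x, y)`, while the leading terms differ by
`max 0 (x + y) - max x y`, which a sign case split identifies with `sign x * sign y * min |x| |y|`.
-/

/-- Box-plus operator x ⊞ y = log((1+e^{x+y})/(e^x+e^y)). -/
noncomputable def boxplus (x y : ℝ) : ℝ :=
  Real.log ((1 + Real.exp (x + y)) / (Real.exp x + Real.exp y))

/-- Box-plus correction term s(x,y) = log(1+e^{-|x+y|}) - log(1+e^{-|x-y|}). -/
noncomputable def sCorr (x y : ℝ) : ℝ :=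
  Real.log (1 + Real.exp (-|x + y|)) - Real.log (1 + Real.exp (-|x - y|))

lemma exp_add_exp_eq (x y : ℝ) :
    Real.exp x + Real.exp y = Real.exp (max x y) * (1 + Real.exp (-|x - y|)) := by
  rcases le_total y x with h | h
  · rw [max_eq_left h, abs_of_nonneg (sub_nonneg.2 h), mul_add, ← Real.exp_add]
    ring_nf
  · rw [max_eq_right h, abs_of_nonpos (sub_nonpos.2 h), mul_add, ← Real.exp_add]
    ring_nf

lemma log_exp_add_exp (x y : ℝ) :
    Real.log (Real.exp x + Real.exp y) = max x y + Real.log (1 + Real.exp (-|x - y|)) := by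
  rw [exp_add_exp_eq, Real.log_mul (Real.exp_ne_zero _) (by positivity), Real.log_exp]

lemma max_zero_add_sub_max (x y : ℝ) :
    max 0 (x + y) - max x y = Real.sign x * Real.sign y * min |x| |y| := by
  rcases lt_trichotomy x 0 with hx | rfl | hx
  · rcases lt_trichotomy y 0 with hy | rfl | hy
    · simp only [Real.sign_of_neg hx, Real.sign_of_neg hy, abs_of_neg hx, abs_of_neg hy]
      grind
    · simp [max_comm]
    · simp only [Real.sign_of_neg hx, Real.sign_of_pos hy, abs_of_neg hx, abs_of_pos hy]
      grind
  · simp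
  · rcases lt_trichotomy y 0 with hy | rfl | hy
    · simp only [Real.sign_of_pos hx, Real.sign_of_neg hy, abs_of_pos hx, abs_of_neg hy]
      grind
    · simp [max_comm]
    · simp only [Real.sign_of_pos hx, Real.sign_of_pos hy, abs_of_pos hx, abs_of_pos hy]
      grind

theorem boxplus_eq_minsum_add_sCorr (x y : ℝ) :
    boxplus x y = Real.sign x * Real.sign y * min |x| |y| + sCorr x y := by
  have numerator := log_exp_add_exp 0 (x + y)
  rw [Real.exp_zero, zero_sub, abs_neg] at numerator
  rw [boxplus, sCorr, Real.log_div (by positivity) (by positivity), numerator,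
    log_exp_add_exp, ← max_zero_add_sub_max]
  ring
end

section
/- For all real numbers x and y, the box-plus output x ⊞ y = log((1 + e^{x+y})/(e^x + e^y)) satisfies |x ⊞ y| ≤ min(|x|, |y|), i.e., the SPA check-node message magnitude is bounded above by the min-sum check-node message magnitude. -/
lemma boxplus_comm (x y : ℝ) : boxplus x y = boxplus y x := by
  unfold boxplus; rw [add_comm x y, add_comm (Real.exp x)]

lemma abs_boxplus_le_abs_left (x y : ℝ) : |boxplus x y| ≤ |x| := by
  have hB : (0:ℝ) < Real.exp x + Real.exp y := by positivity
  have hA : (0:ℝ) < 1 + Real.exp (x + y) := by positivity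
  have hpos : (0:ℝ) < (1 + Real.exp (x + y)) / (Real.exp x + Real.exp y) := by positivity
  rw [abs_le]
  constructor
  · rw [boxplus, Real.le_log_iff_exp_le hpos, le_div_iff₀ hB]
    have h1 : Real.exp (-|x|) * Real.exp x ≤ 1 := by
      rw [← Real.exp_add]
      calc Real.exp (-|x| + x) ≤ Real.exp 0 := by
            apply Real.exp_le_exp.mpr; nlinarith [neg_abs_le x, le_abs_self x]
        _ = 1 := Real.exp_zero
    have h2 : Real.exp (-|x|) * Real.exp y ≤ Real.exp (x + y) := by
      rw [← Real.exp_add]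
      apply Real.exp_le_exp.mpr; nlinarith [neg_abs_le x]
    nlinarith
  · rw [boxplus, Real.log_le_iff_le_exp hpos, div_le_iff₀ hB]
    have h1 : (1:ℝ) ≤ Real.exp |x| * Real.exp x := by
      rw [← Real.exp_add]
      calc (1:ℝ) = Real.exp 0 := Real.exp_zero.symm
        _ ≤ Real.exp (|x| + x) := by
            apply Real.exp_le_exp.mpr; nlinarith [neg_abs_le x]
    have h2 : Real.exp (x + y) ≤ Real.exp |x| * Real.exp y := by
      rw [← Real.exp_add]
      apply Real.exp_le_exp.mpr; nlinarith [le_abs_self x]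
    nlinarith
  
theorem abs_boxplus_le_min_abs (x y : ℝ) : |boxplus x y| ≤ min |x| |y| := by
  refine le_min (abs_boxplus_le_abs_left x y) ?_
  rw [boxplus_comm]; exact abs_boxplus_le_abs_left y x
end

section
/- For all nonzero real numbers x and y, the box-plus output x ⊞ y = log((1 + e^{x+y})/(e^x + e^y)) has the same sign as x·y: if xy > 0 then x ⊞ y > 0, and if xy < 0 then x ⊞ y < 0. -/
theorem boxplus_sign (x y : ℝ) (hx : x ≠ 0) (hy : y ≠ 0) :
    (x * y > 0 → boxplus x y > 0) ∧ (x * y < 0 → boxplus x y < 0) := by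
  have ha : 0 < Real.exp x := Real.exp_pos x
  have hb : 0 < Real.exp y := Real.exp_pos y
  have hd : 0 < Real.exp x + Real.exp y := by linarith
  have key : 1 + Real.exp (x + y) - (Real.exp x + Real.exp y)
      = (Real.exp x - 1) * (Real.exp y - 1) := by
    rw [Real.exp_add]; ring
  constructor
  · intro h
    have hfac : 0 < (Real.exp x - 1) * (Real.exp y - 1) := by
      rcases lt_or_gt_of_ne hx with hx' | hx'
      · have hy' : y < 0 := by nlinarith
        have := Real.exp_lt_one_iff.mpr hx'
        have := Real.exp_lt_one_iff.mpr hy'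
        nlinarith
      · have hy' : 0 < y := by nlinarith
        have := Real.one_lt_exp_iff.mpr hx'
        have := Real.one_lt_exp_iff.mpr hy'
        nlinarith
    have : 1 < (1 + Real.exp (x + y)) / (Real.exp x + Real.exp y) := by
      rw [lt_div_iff₀ hd]; nlinarith
    exact Real.log_pos this
  · intro h
    have hfac : (Real.exp x - 1) * (Real.exp y - 1) < 0 := by
      rcases lt_or_gt_of_ne hx with hx' | hx'
      · have hy' : 0 < y := by nlinarith
        have := Real.exp_lt_one_iff.mpr hx'
        have := Real.one_lt_exp_iff.mpr hy'
        nlinarith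
      · have hy' : y < 0 := by nlinarith
        have := Real.one_lt_exp_iff.mpr hx'
        have := Real.exp_lt_one_iff.mpr hy'
        nlinarith
    have hnum : 0 < 1 + Real.exp (x + y) := by positivity
    have : (1 + Real.exp (x + y)) / (Real.exp x + Real.exp y) < 1 := by
      rw [div_lt_one hd]; nlinarith
    exact Real.log_neg (by positivity) this
end

section
/- For all real x and y, 2·artanh(tanh(x/2)·tanh(y/2)) = log((1 + e^{x+y})/(e^x + e^y)), i.e., the tanh-rule form of the pairwise sum-product check node update equals the box-plus form. -/
/-- Inverse hyperbolic tangent: artanh(x) = (1/2)·log((1+x)/(1−x)). -/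
noncomputable def artanh (x : ℝ) : ℝ := (1 / 2) * Real.log ((1 + x) / (1 - x))

lemma tanh_half (x : ℝ) :
    Real.tanh (x / 2) = (Real.exp x - 1) / (Real.exp x + 1) := by
  have h : Real.exp (x / 2) * Real.exp (x / 2) = Real.exp x := by
    rw [← Real.exp_add]; ring_nf
  have hpos : 0 < Real.exp (x / 2) := Real.exp_pos _
  have hne : Real.exp (x / 2) ≠ 0 := hpos.ne'
  have hd : Real.exp (x / 2) + (Real.exp (x / 2))⁻¹ ≠ 0 := by positivity
  have hd2 : Real.exp x + 1 ≠ 0 := by positivity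
  rw [Real.tanh_eq_sinh_div_cosh, Real.sinh_eq, Real.cosh_eq, Real.exp_neg, ← h]
  field_simp

lemma frac_key (a b : ℝ) (ha : 0 < a) (hb : 0 < b) :
    (1 + (a - 1) / (a + 1) * ((b - 1) / (b + 1))) /
      (1 - (a - 1) / (a + 1) * ((b - 1) / (b + 1))) = (1 + a * b) / (a + b) := by
  have h1 : a + 1 ≠ 0 := by positivity
  have h2 : b + 1 ≠ 0 := by positivity
  have h3 : a + b ≠ 0 := by positivity
  rw [div_eq_div_iff]
  · field_simp
    ring
  · rw [sub_ne_zero]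
    intro h
    have : (a + 1) * (b + 1) = (a - 1) * (b - 1) := by
      field_simp at h
      linarith [h]
    nlinarith
  · exact h3

theorem tanh_rule_eq_boxplus (x y : ℝ) :
    2 * artanh (Real.tanh (x / 2) * Real.tanh (y / 2)) =
      Real.log ((1 + Real.exp (x + y)) / (Real.exp x + Real.exp y)) := by
  rw [artanh, tanh_half, tanh_half,
    frac_key _ _ (Real.exp_pos x) (Real.exp_pos y), Real.exp_add]
  ring
end

section
/- The box-plus operation x ⊞ y = log((1 + e^{x+y})/(e^x + e^y)) is commutative and associative on the real numbers. -/
lemma exp_boxplus (x y : ℝ) :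
    Real.exp (boxplus x y) = (1 + Real.exp (x + y)) / (Real.exp x + Real.exp y) := by
  unfold boxplus
  apply Real.exp_log
  positivity

theorem boxplus_comm_assoc :
    (∀ x y : ℝ, boxplus x y = boxplus y x) ∧
    (∀ x y z : ℝ, boxplus (boxplus x y) z = boxplus x (boxplus y z)) := by
  constructor
  · intro x y
    unfold boxplus
    rw [add_comm x y, add_comm (Real.exp x)]
  · intro x y z
    have hx := Real.exp_pos x
    have hy := Real.exp_pos y
    have hz := Real.exp_pos z
    have h1 : Real.exp (boxplus x y + z) =
        (1 + Real.exp x * Real.exp y) / (Real.exp x + Real.exp y) * Real.exp z := by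
      rw [Real.exp_add, exp_boxplus, Real.exp_add]
    have h2 : Real.exp (x + boxplus y z) =
        Real.exp x * ((1 + Real.exp y * Real.exp z) / (Real.exp y + Real.exp z)) := by
      rw [Real.exp_add, exp_boxplus, Real.exp_add]
    conv_lhs => rw [boxplus]
    conv_rhs => rw [boxplus]
    rw [h1, h2, exp_boxplus, exp_boxplus, Real.exp_add, Real.exp_add]
    congr 1
    have hxy : Real.exp x + Real.exp y ≠ 0 := by positivity
    have hyz : Real.exp y + Real.exp z ≠ 0 := by positivity
    field_simp
    ring
end
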